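/- arXiv:2511.21478 — 2 statements merged into one kernel-verified Lean document; each statement's English description precedes it below -/
import Mathlib

section
/- Let p ≥ 1 and n ≥ 1 be integers and let ℓ₁, …, ℓ_p be nonnegative integers with ℓ₁ + ⋯ + ℓ_p = p − n. Then the number of permutations π of {1, …, p} such that for every k with 1 ≤ k ≤ p−1 one has Σ_{i=1}^{k} ℓ_{π(i)} > k − n, is equal to n·(p−1)!. (Such orderings are exactly the depth-first degree sequences of plane forests with n trees on p vertices in which the i-th vertex has ℓ_i children; so this counts the plane forests with n trees on a given labelled vertex set with prescribed numbers of children, the key count in the enumeration of bicoloured excursion forests.) -/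
/-!
Each rotation `π ↦ π ∘ (· + r)` permutes the orderings, and among the `p` rotations of any `π`
exactly `n` are forest orderings (the cycle lemma). Double counting the pairs `(π, r)` gives
`p · N = p! · n` for the number `N` of forest orderings.

For the cycle lemma, read the steps `ℓ_{π(i)} − 1 ≥ −1` periodically as a walk `S` losing `n`
per period. The rotation starting at `r` is good exactly when `S (r + p)` is a strict new minimum
of the walk. Since the walk descends by steps of one, every new minimum lowers the running
minimum by exactly one, and over the window `[p − 1, 2p − 1]` the running minimum drops by
exactly `n`.
-/

open scoped BigOperators

namespace VEP

open Finset Function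

section CycleLemma

variable {c : ℕ → ℤ} {p n : ℕ}

def runningMin (c : ℕ → ℤ) : ℕ → ℤ
  | 0 => 0
  | t + 1 => min (runningMin c t) (∑ i ∈ range (t + 1), c i)

theorem le_runningMin_iff {x : ℤ} {t : ℕ} :
    x ≤ runningMin c t ↔ ∀ k ≤ t, x ≤ ∑ i ∈ range k, c i := by
  induction t with
  | zero => simp [runningMin]
  | succ t ih =>
    simp only [runningMin, le_min_iff, ih, Nat.le_succ_iff, or_imp, forall_and, forall_eq]

theorem lt_runningMin_iff {x : ℤ} {t : ℕ} :
    x < runningMin c t ↔ ∀ k ≤ t, x < ∑ i ∈ range k, c i := by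
  simp only [← Int.add_one_le_iff, le_runningMin_iff]

theorem runningMin_le {k t : ℕ} (hk : k ≤ t) : runningMin c t ≤ ∑ i ∈ range k, c i :=
  le_runningMin_iff.1 le_rfl k hk

theorem runningMin_succ (hc : ∀ i, -1 ≤ c i) (t : ℕ) :
    runningMin c (t + 1) =
      runningMin c t - if ∑ i ∈ range (t + 1), c i < runningMin c t then 1 else 0 := by
  have hstep : ∑ i ∈ range t, c i - 1 ≤ ∑ i ∈ range (t + 1), c i := by
    rw [sum_range_succ]; linarith [hc t]
  have hmin := runningMin_le (c := c) le_rfl (t := t)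
  rw [runningMin]
  split_ifs with h <;> omega

theorem card_filter_lt_runningMin (hc : ∀ i, -1 ≤ c i) (a m : ℕ) :
    (#{j ∈ range m | ∑ i ∈ range (a + j + 1), c i < runningMin c (a + j)} : ℤ) =
      runningMin c a - runningMin c (a + m) := by
  induction m with
  | zero => simp
  | succ m ih =>
    rw [range_add_one, filter_insert, ← add_assoc, runningMin_succ hc]
    split_ifs with h
    · rw [card_insert_of_notMem (by simp)]; push_cast; omega
    · omega

theorem sum_range_add_period (hper : Periodic c p) (hsum : ∑ i ∈ range p, c i = -n) (k : ℕ) :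
    ∑ i ∈ range (k + p), c i = ∑ i ∈ range k, c i - n := by
  rw [add_comm, sum_range_add, hsum, sub_eq_neg_add]
  congr 1
  exact sum_congr rfl fun i _ => by rw [add_comm, hper]

theorem runningMin_add_period (hper : Periodic c p) (hsum : ∑ i ∈ range p, c i = -n) {t : ℕ}
    (ht : p ≤ t + 1) : runningMin c (t + p) = runningMin c t - n := by
  apply le_antisymm
  · have : ∀ k ≤ t, runningMin c (t + p) + n ≤ ∑ i ∈ range k, c i := fun k hk => by
      linarith [runningMin_le (c := c) (by omega : k + p ≤ t + p), sum_range_add_period hper hsum k]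
    linarith [le_runningMin_iff.2 this]
  · refine le_runningMin_iff.2 fun k hk => ?_
    rcases le_or_gt k t with hkt | htk
    · linarith [runningMin_le (c := c) hkt]
    · obtain ⟨k, rfl⟩ : ∃ k', k = k' + p := ⟨k - p, by omega⟩
      linarith [runningMin_le (c := c) (t := t) (k := k) (by omega), sum_range_add_period hper hsum k]

theorem forall_neg_lt_sum_iff_lt_runningMin (hn : 1 ≤ n) (hper : Periodic c p)
    (hsum : ∑ i ∈ range p, c i = -n) {r : ℕ} (hr : r < p) :
    (∀ j ∈ Ioo 0 p, -(n : ℤ) < ∑ i ∈ range j, c (r + i)) ↔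
      ∑ i ∈ range (r + p), c i < runningMin c (r + p - 1) := by
  have hsplit (j : ℕ) := sum_range_add c r j
  have hperiod := sum_range_add_period hper hsum r
  rw [lt_runningMin_iff]
  constructor
  · intro h k hk
    rcases lt_trichotomy r k with hrk | rfl | hkr
    · obtain ⟨j, rfl⟩ : ∃ j, k = r + j := ⟨k - r, by omega⟩
      linarith [h j (mem_Ioo.2 ⟨by omega, by omega⟩), hsplit j]
    · linarith [(Nat.one_le_cast (α := ℤ)).2 hn]
    · obtain ⟨j, hj⟩ : ∃ j, k + p = r + j := ⟨k + p - r, by omega⟩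
      have hperiod' := sum_range_add_period hper hsum k
      rw [hj] at hperiod'
      linarith [h j (mem_Ioo.2 ⟨by omega, by omega⟩), hsplit j]
  · intro h j hj
    rw [mem_Ioo] at hj
    linarith [h (r + j) (by omega), hsplit j]

theorem cycle_lemma (hp : 1 ≤ p) (hn : 1 ≤ n) (hper : Periodic c p) (hc : ∀ i, -1 ≤ c i)
    (hsum : ∑ i ∈ range p, c i = -n) :
    #{r ∈ range p | ∀ j ∈ Ioo (0 : ℕ) p, -(n : ℤ) < ∑ i ∈ range j, c (r + i)} = n := by
  have hrecords := card_filter_lt_runningMin hc (p - 1) p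
  rw [runningMin_add_period hper hsum (by omega)] at hrecords
  suffices #{r ∈ range p | ∀ j ∈ Ioo (0 : ℕ) p, -(n : ℤ) < ∑ i ∈ range j, c (r + i)} =
      #{r ∈ range p | ∑ i ∈ range (p - 1 + r + 1), c i < runningMin c (p - 1 + r)} by omega
  refine congrArg card (filter_congr fun r hr => ?_)
  rw [forall_neg_lt_sum_iff_lt_runningMin hn hper hsum (mem_range.1 hr),
    show p - 1 + r + 1 = r + p by omega, show p - 1 + r = r + p - 1 by omega]

end CycleLemma

theorem card_mul_card_filter_eq_of_forall_card_filter {ι α : Type*} [Fintype ι] [Fintype α]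
    (e : ι → Equiv.Perm α) (P : α → Prop) [DecidablePred P] {n : ℕ}
    (h : ∀ x, #{i | P (e i x)} = n) :
    Fintype.card ι * #{x | P x} = Fintype.card α * n := by
  have hinvariant (i : ι) : #{x | P (e i x)} = #{x | P x} := by
    simp only [card_filter]
    exact Equiv.sum_comp (e i) fun x => if P x then 1 else 0
  calc Fintype.card ι * #{x | P x} = ∑ i, #{x | P (e i x)} := by
        simp only [hinvariant, sum_const, card_univ, smul_eq_mul]
    _ = ∑ x, #{i | P (e i x)} := by
        simp only [card_filter]
        exact sum_comm
    _ = Fintype.card α * n := by simp only [h, sum_const, card_univ, smul_eq_mul]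

theorem sum_fin_ite_val_lt {M : Type*} [AddCommMonoid M] {p k : ℕ} (f : ℕ → M) (hk : k ≤ p) :
    ∑ i : Fin p, (if (i : ℕ) < k then f i else 0) = ∑ i ∈ range k, f i := by
  rw [Fin.sum_univ_eq_sum_range (fun i => if i < k then f i else 0), ← sum_filter]
  congr 1
  ext i
  simp only [mem_filter, mem_range]
  omega

section Orderings

variable {p n : ℕ}

def IsForestOrdering (n : ℕ) (ℓ : Fin p → ℕ) (π : Equiv.Perm (Fin p)) : Prop :=
  ∀ k : ℕ, 1 ≤ k → k ≤ p - 1 →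
    (k : ℤ) - n < ∑ i : Fin p, (if (i : ℕ) < k then (ℓ (π i) : ℤ) else 0)

open Fin.NatCast

variable [NeZero p] (ℓ : Fin p → ℕ) (π : Equiv.Perm (Fin p))

/-- The steps `ℓ_{π(i)} − 1` of the walk of `π`, extended `p`-periodically through the cast
`ℕ → Fin p`. -/
def step (i : ℕ) : ℤ := ℓ (π (i : Fin p)) - 1

theorem step_periodic : Periodic (step ℓ π) p := fun i => by simp [step]

theorem neg_one_le_step (i : ℕ) : -1 ≤ step ℓ π i := by
  simp only [step]
  omega

theorem sum_range_step (hsum : ∑ i, (ℓ i : ℤ) = p - n) : ∑ i ∈ range p, step ℓ π i = -n := by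
  rw [← Fin.sum_univ_eq_sum_range]
  simp only [step, Fin.cast_val_eq_self]
  rw [sum_sub_distrib, Equiv.sum_comp π fun i => (ℓ i : ℤ), hsum]
  simp

theorem isForestOrdering_mul_addRight_iff (r : Fin p) :
    IsForestOrdering n ℓ (π * Equiv.addRight r) ↔
      ∀ j ∈ Ioo 0 p, -(n : ℤ) < ∑ i ∈ range j, step ℓ π (r + i) := by
  have hpartial (k : ℕ) (hk : k ≤ p) :
      ∑ i : Fin p, (if (i : ℕ) < k then (ℓ ((π * Equiv.addRight r) i) : ℤ) else 0) =
        ∑ i ∈ range k, step ℓ π (r + i) + k := by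
    calc _ = ∑ i : Fin p, (if (i : ℕ) < k then (ℓ (π ((r + i : ℕ) : Fin p)) : ℤ) else 0) := by
          simp [add_comm]
      _ = ∑ i ∈ range k, (ℓ (π ((r + i : ℕ) : Fin p)) : ℤ) :=
          sum_fin_ite_val_lt (fun i => (ℓ (π ((r + i : ℕ) : Fin p)) : ℤ)) hk
      _ = _ := by simp [step, sum_sub_distrib]
  constructor
  · intro h j hj
    rw [mem_Ioo] at hj
    linarith [h j hj.1 (by omega), hpartial j hj.2.le]
  · intro h k hk1 hk2
    linarith [h k (mem_Ioo.2 ⟨hk1, by omega⟩), hpartial k (by omega)]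

theorem card_filter_isForestOrdering_mul_addRight [DecidablePred (IsForestOrdering n ℓ)]
    (hn : 1 ≤ n) (hsum : ∑ i, (ℓ i : ℤ) = p - n) :
    #{r | IsForestOrdering n ℓ (π * Equiv.addRight r)} = n := by
  refine Eq.trans ?_ (cycle_lemma NeZero.one_le hn
    (step_periodic ℓ π) (neg_one_le_step ℓ π) (sum_range_step ℓ π hsum))
  rw [card_filter, card_filter, ← Fin.sum_univ_eq_sum_range]
  simp only [isForestOrdering_mul_addRight_iff]

end Orderings

/-- Counting plane forests with `n` trees and prescribed numbers of children via the orderings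
of the child-number sequence whose proper partial sums of `(ℓ_{π(i)} − 1)` stay above `−n`:
there are exactly `n·(p−1)!` such orderings. -/
theorem count_forest_orderings (p n : ℕ) (hp : 1 ≤ p) (hn : 1 ≤ n) (ℓ : Fin p → ℕ)
    (hsum : (∑ i : Fin p, (ℓ i : ℤ)) = (p : ℤ) - (n : ℤ)) :
    Nat.card {π : Equiv.Perm (Fin p) //
        ∀ k : ℕ, 1 ≤ k → k ≤ p - 1 →
          ((k : ℤ) - (n : ℤ)
            < ∑ i : Fin p, (if (i : ℕ) < k then (ℓ (π i) : ℤ) else 0))}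
      = n * Nat.factorial (p - 1) := by
  classical
  have : NeZero p := ⟨by omega⟩
  have hcount := card_mul_card_filter_eq_of_forall_card_filter
    (fun r : Fin p => Equiv.mulRight (Equiv.addRight r)) (IsForestOrdering n ℓ)
    (card_filter_isForestOrdering_mul_addRight ℓ · hn hsum)
  rw [Fintype.card_fin, Fintype.card_perm, Fintype.card_fin,
    ← Nat.mul_factorial_pred (by omega), mul_assoc] at hcount
  change Nat.card {π // IsForestOrdering n ℓ π} = _
  rw [Nat.card_eq_fintype_card, Fintype.card_subtype, mul_comm n]
  exact Nat.eq_of_mul_eq_mul_left hp hcount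

end VEP
end

section
/- Let g₃ : [0,1] → ℝ be defined by g₃(z) = (−z² + 16z − 3 + √(49−z)·(1−z)^{3/2}) / (2(z+5)). Then, as z → 1 from the left, g₃(z) = 1 − (1−z) + (1/√3)·(1−z)^{3/2} + O((1−z)²); that is, there exist constants C > 0 and δ ∈ (0,1) such that for all z with 1 − δ < z ≤ 1, |g₃(z) − 1 + (1−z) − 3^{−1/2}·(1−z)^{3/2}| ≤ C·(1−z)². -/
namespace VEP

/-- The generating function `g₃` for the incomplete binary tree model with natural embedding:
`g₃(z) = (−z² + 16z − 3 + √(49−z)(1−z)^{3/2}) / (2(z+5))`. -/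
noncomputable def g3 (z : ℝ) : ℝ :=
  (-z ^ 2 + 16 * z - 3 + Real.sqrt (49 - z) * (1 - z) ^ ((3 : ℝ) / 2)) / (2 * (z + 5))

private lemma aux_bound (z s3 d q : ℝ) (ht0 : 0 ≤ 1 - z) (ht1 : 1 - z ≤ 1)
    (hs0 : 0 ≤ s3) (hs : s3 ≤ 1 - z) (hq1 : 1 ≤ q) (hd0 : 0 ≤ d) (hd : d ≤ 1 - z) :
    |(-3 * q * (1 - z) ^ 2 + s3 * (q * d + 2 * (1 - z)))| ≤ 1 * (1 - z) ^ 2 * (q * (2 * (z + 5))) := by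
  rw [abs_le]
  have h1 : s3 * d ≤ (1 - z) * (1 - z) := mul_le_mul hs hd hd0 ht0
  have h2 : s3 * (1 - z) ≤ (1 - z) * (1 - z) := mul_le_mul_of_nonneg_right hs ht0
  have h3 : 0 ≤ s3 * d := mul_nonneg hs0 hd0
  have h4 : 0 ≤ s3 * (1 - z) := mul_nonneg hs0 ht0
  have h5 : 0 ≤ (1 - z) * (1 - z) := mul_nonneg ht0 ht0
  constructor <;> nlinarith [mul_le_mul_of_nonneg_left h1 (by linarith : (0:ℝ) ≤ q),
    mul_le_mul_of_nonneg_left h5 (by linarith : (0:ℝ) ≤ q - 1),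
    mul_nonneg (mul_nonneg (by linarith : (0:ℝ) ≤ q) h5) ht0,
    mul_nonneg (by linarith : (0:ℝ) ≤ q) h3]

/-- Expansion of `g₃` near `z = 1`:
`g₃(z) = 1 − (1−z) + (1/√3)·(1−z)^{3/2} + O((1−z)²)` as `z → 1⁻`. -/
theorem g3_expansion_near_one :
    ∃ C > (0 : ℝ), ∃ δ ∈ Set.Ioo (0 : ℝ) 1, ∀ z : ℝ, 1 - δ < z → z ≤ 1 →
      |g3 z - 1 + (1 - z) - (1 - z) ^ ((3 : ℝ) / 2) / Real.sqrt 3| ≤ C * (1 - z) ^ 2 := by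
  refine ⟨1, one_pos, 1/2, ⟨by norm_num, by norm_num⟩, ?_⟩
  intro z hz1 hz2
  have ht0 : (0:ℝ) ≤ 1 - z := by linarith
  have ht1 : 1 - z ≤ 1 := by linarith
  set s : ℝ := Real.sqrt (1 - z) with hs
  have hs0 : 0 ≤ s := Real.sqrt_nonneg _
  have hs2 : s ^ 2 = 1 - z := Real.sq_sqrt ht0
  have hs1 : s ≤ 1 := by nlinarith
  set r : ℝ := Real.sqrt (49 - z) with hr
  have hr0 : 0 ≤ r := Real.sqrt_nonneg _
  have hr2 : r ^ 2 = 49 - z := Real.sq_sqrt (by linarith)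
  set q : ℝ := Real.sqrt 3 with hq
  have hq0 : 0 < q := Real.sqrt_pos.mpr (by norm_num)
  have hq2 : q ^ 2 = 3 := Real.sq_sqrt (by norm_num)
  have hq1 : 1 ≤ q := by nlinarith
  have hqle : q ≤ 2 := by nlinarith
  have hts : (1 - z) ^ ((3:ℝ)/2) = s ^ 3 := by
    rw [show (3:ℝ)/2 = (1/2 : ℝ) * ((3:ℕ) : ℝ) by norm_num, Real.rpow_mul ht0,
      Real.rpow_natCast, hs, Real.sqrt_eq_rpow]
  rw [g3, hts]
  have hD : (0:ℝ) < 2 * (z + 5) := by linarith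
  -- r - 4q is between 0 and (1-z)
  have hrq : (r - 4*q) * (r + 4*q) = 1 - z := by nlinarith
  have hrge : 4*q ≤ r := by nlinarith
  have hrle : r - 4*q ≤ 1 - z := by nlinarith
  have heq : (-z ^ 2 + 16 * z - 3 + r * s ^ 3) / (2 * (z + 5)) - 1 + (1 - z) - s ^ 3 / q
      = (-3 * q * (1-z)^2 + s ^ 3 * (q * (r - 4*q) + 2 * (1-z))) / (q * (2 * (z + 5))) := by
    field_simp
    linear_combination (4 * s ^ 3) * hq2
  rw [heq, abs_div, abs_of_pos (mul_pos hq0 hD), div_le_iff₀ (mul_pos hq0 hD)]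
  have hs3 : s ^ 3 ≤ 1 - z := by nlinarith
  have hs3' : 0 ≤ s ^ 3 := by positivity
  exact aux_bound z (s ^ 3) (r - 4 * q) q ht0 ht1 hs3' hs3 hq1 (by linarith) hrle

end VEP
end
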